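/- arXiv:2409.14134 — 5 statements merged into one kernel-verified Lean document; each statement's English description precedes it below -/
import Mathlib

section
/- For every n-vertex graph G (with n ≥ 2) there exists a vertex subset A ⊆ V(G) with |A| ≥ n/(30·log n) such that the induced subgraph H = G[A] satisfies Δ(H) ≤ 5·(log n)·δ(H). -/
/-!
Put `K = 5 log n`, `s = n / (30 log n)` and suppose that no set of at least `s` vertices induces a
subgraph with `Δ ≤ K δ`. If `G[W]` has maximum degree at most `D`, repeatedly deleting vertices of
degree at most `D / K` leaves a core of minimum degree above `D / K`; this core is nearly regular,
so it has fewer than `s` vertices, and hence the degree sum of `G[W]` is at most `c D` with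
`c = 2n / K + s`. Now lower the maximum degree one unit at a time, from `n` down to
`D₀ = ⌈5 log n⌉`, by deleting the vertices of top degree: the degree-sum bound makes step `D` cost
about `c / D` vertices, in total at most `c log n = 13n / 30`. The remaining graph has maximum
degree `D₀` and at least `17n / 30` vertices, so it contains an independent set of size at least
`17n / (30 (D₀ + 1)) ≥ s`, which is trivially nearly regular: a contradiction.
-/

open Finset

theorem Real.inv_add_one_le_log_add_one_sub_log {x : ℝ} (hx : 0 < x) :
    (x + 1)⁻¹ ≤ Real.log (x + 1) - Real.log x := by
  have h := Real.one_sub_inv_le_log_of_pos (div_pos (by linarith : 0 < x + 1) hx)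
  rwa [Real.log_div (by positivity) hx.ne', inv_div, one_sub_div (by positivity),
    add_sub_cancel_left, one_div] at h

namespace SimpleGraph

variable {V : Type*} (G : SimpleGraph V) [DecidableRel G.Adj]

def degreeIn (W : Finset V) (v : V) : ℕ := #{x ∈ W | G.Adj v x}

def degreeSumIn (W : Finset V) : ℕ := ∑ v ∈ W, G.degreeIn W v

def IsNearlyRegularIn (K : ℝ) (A : Finset V) : Prop :=
  ∀ v ∈ A, ∀ w ∈ A, (G.degreeIn A v : ℝ) ≤ K * G.degreeIn A w

variable {G}

theorem degreeIn_mono {W' W : Finset V} (h : W' ⊆ W) (v : V) :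
    G.degreeIn W' v ≤ G.degreeIn W v :=
  card_le_card (filter_subset_filter _ h)

theorem degreeIn_le_card (W : Finset V) (v : V) : G.degreeIn W v ≤ #W :=
  card_filter_le _ _

theorem degreeSumIn_le_card_mul {W : Finset V} {D : ℕ} (hW : ∀ v ∈ W, G.degreeIn W v ≤ D) :
    G.degreeSumIn W ≤ #W * D := by
  simpa [degreeSumIn] using sum_le_sum hW

theorem degreeSumIn_filter_add_le (W : Finset V) (D : ℕ) :
    G.degreeSumIn {v ∈ W | G.degreeIn W v ≤ D} + (D + 1) * #{v ∈ W | ¬G.degreeIn W v ≤ D} ≤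
      G.degreeSumIn W := by
  rw [degreeSumIn, degreeSumIn, ← sum_filter_add_sum_filter_not W (G.degreeIn W · ≤ D)]
  gcongr with v hv
  · exact degreeIn_mono (filter_subset _ _) v
  · rw [mul_comm, ← smul_eq_mul]
    refine card_nsmul_le_sum _ _ _ fun v hv => ?_
    have := (mem_filter.1 hv).2
    omega

theorem isNearlyRegularIn_of_isIndepSet (K : ℝ) {I : Finset V} (hI : G.IsIndepSet I) :
    G.IsNearlyRegularIn K I := by
  have hzero : ∀ v ∈ I, G.degreeIn I v = 0 := fun v hv =>
    card_eq_zero.2 <| filter_false_of_mem fun x hx hvx => hI hv hx (G.ne_of_adj hvx) hvx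
  intro v hv w hw
  simp [hzero v hv, hzero w hw]

section DecidableEq

variable [DecidableEq V]

theorem degreeIn_insert_self (W : Finset V) (v : V) :
    G.degreeIn (insert v W) v = G.degreeIn W v := by
  simp [degreeIn, filter_insert]

theorem degreeSumIn_insert {W : Finset V} {v : V} (hv : v ∉ W) :
    G.degreeSumIn (insert v W) = G.degreeSumIn W + 2 * G.degreeIn W v := by
  have hdeg : ∀ u ∈ W,
      G.degreeIn (insert v W) u = G.degreeIn W u + if G.Adj v u then 1 else 0 := by
    intro u hu
    by_cases h : G.Adj v u
    · simp [degreeIn, filter_insert, h.symm, card_insert_of_notMem, hv, h]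
    · have h' : ¬G.Adj u v := fun h' => h h'.symm
      simp [degreeIn, filter_insert, h, h']
  have hsym : ∑ u ∈ W, (if G.Adj v u then 1 else 0) = G.degreeIn W v :=
    (card_filter _ _).symm
  rw [degreeSumIn, sum_insert hv, degreeIn_insert_self, sum_congr rfl hdeg, sum_add_distrib, hsym,
    degreeSumIn]
  ring

theorem exists_core (t : ℕ) (W : Finset V) :
    ∃ C ⊆ W, (∀ v ∈ C, t < G.degreeIn C v) ∧
      G.degreeSumIn W ≤ 2 * t * #(W \ C) + G.degreeSumIn C := by
  induction W using Finset.strongInduction with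
  | H W ih =>
    by_cases! hmin : ∀ v ∈ W, t < G.degreeIn W v
    · exact ⟨W, Subset.rfl, hmin, by simp⟩
    obtain ⟨v, hv, hvt⟩ := hmin
    obtain ⟨C, hCW, hC, hsum⟩ := ih (W.erase v) (erase_ssubset hv)
    refine ⟨C, hCW.trans (erase_subset v W), hC, ?_⟩
    have hsplit := G.degreeSumIn_insert (notMem_erase v W)
    rw [insert_erase hv, ← degreeIn_insert_self, insert_erase hv] at hsplit
    have hcard : #(W \ C) = #(W.erase v \ C) + 1 := by
      rw [← insert_erase hv, insert_sdiff_of_notMem _ (fun h => notMem_erase v W (hCW h)),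
        card_insert_of_notMem (fun h => notMem_erase v W (sdiff_subset h)), insert_erase hv]
    rw [hsplit, hcard]
    nlinarith

end DecidableEq

theorem exists_isIndepSet {W : Finset V} {D : ℕ} (hW : ∀ v ∈ W, G.degreeIn W v ≤ D) :
    ∃ I ⊆ W, G.IsIndepSet I ∧ #W ≤ (D + 1) * #I := by
  classical
  induction W using Finset.strongInduction with
  | H W ih =>
    obtain rfl | ⟨v, hv⟩ := W.eq_empty_or_nonempty
    · exact ⟨∅, Subset.rfl, by simp, by simp⟩
    set W' := {x ∈ W.erase v | ¬G.Adj v x}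
    have hW'W : W' ⊆ W := (filter_subset _ _).trans (erase_subset v W)
    have hvW' : v ∉ W' := fun h => notMem_erase v W (filter_subset _ _ h)
    obtain ⟨I, hIW', hI, hcard⟩ := ih W' (ssubset_of_subset_of_ne hW'W fun h => hvW' (h ▸ hv))
      fun u hu => (degreeIn_mono hW'W u).trans (hW u (hW'W hu))
    refine ⟨insert v I, insert_subset hv (hIW'.trans hW'W), ?_, ?_⟩
    · rw [coe_insert]
      refine hI.insert fun u hu _ => ?_
      have hvu : ¬G.Adj v u := (mem_filter.1 (hIW' hu)).2
      exact ⟨hvu, fun h => hvu h.symm⟩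
    · have hsplit : #W = #{x ∈ W.erase v | G.Adj v x} + #W' + 1 := by
        rw [card_filter_add_card_filter_not, card_erase_add_one hv]
      have hnbr : #{x ∈ W.erase v | G.Adj v x} ≤ D :=
        (card_le_card (filter_subset_filter _ (erase_subset v W))).trans (hW v hv)
      rw [card_insert_of_notMem fun h => hvW' (hIW' h)]
      nlinarith

theorem exists_isNearlyRegularIn_degreeSumIn_le {K : ℝ} (hK : 0 < K) {W : Finset V} {D : ℕ}
    (hW : ∀ v ∈ W, G.degreeIn W v ≤ D) :
    ∃ C : Finset V, G.IsNearlyRegularIn K C ∧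
      (G.degreeSumIn W : ℝ) ≤ (2 * #W / K + #C) * D := by
  classical
  set t := ⌊(D : ℝ) / K⌋₊
  obtain ⟨C, hCW, hC, hsum⟩ := G.exists_core t W
  have hCD : ∀ v ∈ C, G.degreeIn C v ≤ D := fun v hv =>
    (degreeIn_mono hCW v).trans (hW v (hCW hv))
  refine ⟨C, fun v hv w hw => ?_, ?_⟩
  · have hD : (D : ℝ) < K * (t + 1) := by
      rw [← div_lt_iff₀' hK]
      exact Nat.lt_floor_add_one _
    have hv : (G.degreeIn C v : ℝ) ≤ D := by exact_mod_cast hCD v hv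
    have hw : (t : ℝ) + 1 ≤ G.degreeIn C w := by exact_mod_cast hC w hw
    nlinarith
  · have ht : (t : ℝ) ≤ D / K := Nat.floor_le (by positivity)
    have hdiff : (#(W \ C) : ℝ) ≤ #W := by exact_mod_cast card_le_card sdiff_subset
    have hC : (G.degreeSumIn C : ℝ) ≤ #C * D := by exact_mod_cast degreeSumIn_le_card_mul hCD
    have hsum : (G.degreeSumIn W : ℝ) ≤ 2 * t * #(W \ C) + G.degreeSumIn C := by
      exact_mod_cast hsum
    calc (G.degreeSumIn W : ℝ) ≤ 2 * t * #(W \ C) + G.degreeSumIn C := hsum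
      _ ≤ 2 * (D / K) * #W + #C * D := by gcongr
      _ = (2 * #W / K + #C) * D := by ring

/-- Removing the vertices of degree `D + 1` from a graph of maximum degree `D + 1` lowers the
potential `#W - degreeSumIn W / D` by at most `c / (D + 1) ≤ c (log (D + 1) - log D)`. -/
theorem exists_degreeIn_le_of_degreeSumIn_le {c : ℝ} (hc : 0 ≤ c)
    (hcap : ∀ (U : Finset V) (D : ℕ), (∀ v ∈ U, G.degreeIn U v ≤ D) →
      (G.degreeSumIn U : ℝ) ≤ c * D)
    {D₀ D : ℕ} (hD₀ : 0 < D₀) (hD : D₀ ≤ D) {W : Finset V} (hW : ∀ v ∈ W, G.degreeIn W v ≤ D) :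
    ∃ W' : Finset V, (∀ v ∈ W', G.degreeIn W' v ≤ D₀) ∧
      (#W : ℝ) - G.degreeSumIn W / D ≤ #W' + c * (Real.log D - Real.log D₀) := by
  induction D, hD using Nat.le_induction generalizing W with
  | base =>
    refine ⟨W, hW, ?_⟩
    have : (0 : ℝ) ≤ G.degreeSumIn W / D₀ := by positivity
    simp only [sub_self, mul_zero, add_zero]
    linarith
  | succ D hD ih =>
    set W₁ := {v ∈ W | G.degreeIn W v ≤ D}
    have hW₁ : ∀ v ∈ W₁, G.degreeIn W₁ v ≤ D := fun v hv =>
      (degreeIn_mono (filter_subset _ _) v).trans (mem_filter.1 hv).2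
    obtain ⟨W', hW', hcard⟩ := ih hW₁
    refine ⟨W', hW', ?_⟩
    have hDpos : (0 : ℝ) < D := by exact_mod_cast hD₀.trans_le hD
    have hpeel : (G.degreeSumIn W₁ : ℝ) + (D + 1) * #{v ∈ W | ¬G.degreeIn W v ≤ D} ≤
        G.degreeSumIn W := by exact_mod_cast G.degreeSumIn_filter_add_le W D
    have hsplit : (#W₁ : ℝ) + #{v ∈ W | ¬G.degreeIn W v ≤ D} = #W := by
      exact_mod_cast card_filter_add_card_filter_not _
    have hS : (G.degreeSumIn W₁ : ℝ) / (D + 1) + #{v ∈ W | ¬G.degreeIn W v ≤ D} ≤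
        G.degreeSumIn W / (D + 1) := by
      rw [div_add' _ _ _ (by positivity), div_le_div_iff_of_pos_right (by positivity)]
      linarith
    have hS₁ : (G.degreeSumIn W₁ : ℝ) / D - G.degreeSumIn W₁ / (D + 1) ≤ c * (D + 1 : ℝ)⁻¹ := by
      have h := hcap W₁ D hW₁
      rw [div_sub_div _ _ hDpos.ne' (by positivity), div_le_iff₀ (by positivity)]
      field_simp
      nlinarith
    have hlog := Real.inv_add_one_le_log_add_one_sub_log hDpos
    push_cast
    nlinarith [mul_le_mul_of_nonneg_left hlog hc]

variable [Fintype V]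

theorem exists_degreeIn_le_card_ge {c : ℝ} (hc : 0 ≤ c)
    (hcap : ∀ (U : Finset V) (D : ℕ), (∀ v ∈ U, G.degreeIn U v ≤ D) →
      (G.degreeSumIn U : ℝ) ≤ c * D)
    {D₀ : ℕ} (hD₀ : 3 ≤ D₀) :
    ∃ W : Finset V, (∀ v ∈ W, G.degreeIn W v ≤ D₀) ∧
      (Fintype.card V : ℝ) - c * Real.log (Fintype.card V) ≤ #W := by
  have hlogn : 0 ≤ Real.log (Fintype.card V) := Real.log_natCast_nonneg _
  have hdeg (D : ℕ) (hD : Fintype.card V ≤ D) :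
      ∀ v ∈ (univ : Finset V), G.degreeIn univ v ≤ D :=
    fun v _ => (degreeIn_le_card _ _).trans (by rwa [card_univ])
  rcases le_or_gt D₀ (Fintype.card V) with hn | hn
  · obtain ⟨W, hW, hcard⟩ :=
      exists_degreeIn_le_of_degreeSumIn_le hc hcap (by omega) hn (hdeg _ le_rfl)
    refine ⟨W, hW, ?_⟩
    have h3 : (3 : ℝ) ≤ D₀ := by exact_mod_cast hD₀
    have hlogD₀ : 1 ≤ Real.log D₀ := by
      rw [Real.le_log_iff_exp_le (by linarith)]
      linarith [Real.exp_one_lt_d9]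
    have hsum : (G.degreeSumIn univ : ℝ) / Fintype.card V ≤ c := by
      rw [div_le_iff₀ (by exact_mod_cast (show 0 < Fintype.card V by omega))]
      exact hcap _ _ (hdeg _ le_rfl)
    rw [card_univ] at hcard
    nlinarith
  · refine ⟨univ, hdeg _ hn.le, ?_⟩
    rw [card_univ]
    nlinarith

theorem exists_card_ge_isNearlyRegularIn (G : SimpleGraph V) [DecidableRel G.Adj] {K s : ℝ}
    (hK : 0 < K) {D₀ : ℕ} (hD₀ : 3 ≤ D₀)
    (hsize : s * (D₀ + 1) + (2 * Fintype.card V / K + s) * Real.log (Fintype.card V) ≤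
      Fintype.card V) :
    ∃ A : Finset V, s ≤ #A ∧ G.IsNearlyRegularIn K A := by
  by_contra! hbad
  have hs : 0 < s := by
    by_contra! hs
    exact hbad ∅ (by simpa using hs) (by simp [IsNearlyRegularIn])
  have hcap (U : Finset V) (D : ℕ) (hU : ∀ v ∈ U, G.degreeIn U v ≤ D) :
      (G.degreeSumIn U : ℝ) ≤ (2 * Fintype.card V / K + s) * D := by
    obtain ⟨C, hC, hsum⟩ := exists_isNearlyRegularIn_degreeSumIn_le hK hU
    have hCs : (#C : ℝ) < s := lt_of_not_ge fun h => hbad C h hC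
    have hUn : (#U : ℝ) ≤ Fintype.card V := by exact_mod_cast card_le_univ U
    exact hsum.trans (by gcongr)
  obtain ⟨W, hW, hWcard⟩ := exists_degreeIn_le_card_ge (by positivity) hcap hD₀
  obtain ⟨I, -, hI, hIcard⟩ := exists_isIndepSet hW
  have hIcard : (#W : ℝ) ≤ (D₀ + 1) * #I := by exact_mod_cast hIcard
  refine hbad I ?_ (isNearlyRegularIn_of_isIndepSet K hI)
  nlinarith

end SimpleGraph

theorem exists_nearly_regular_induced_general {V : Type*} [Fintype V]
    (G : SimpleGraph V) [DecidableRel G.Adj] (hn : 2 ≤ Fintype.card V) :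
    ∃ A : Finset V,
      (Fintype.card V : ℝ) / (30 * Real.log (Fintype.card V)) ≤ (A.card : ℝ) ∧
      ∀ v ∈ A, ∀ w ∈ A,
        ((A.filter (fun x => G.Adj v x)).card : ℝ) ≤
          5 * Real.log (Fintype.card V) * ((A.filter (fun x => G.Adj w x)).card : ℝ) := by
  set n : ℝ := (Fintype.card V : ℝ)
  set L := Real.log n
  have hnpos : 0 < n := by positivity
  have hL : 0.69 < L := calc
    (0.69 : ℝ) < Real.log 2 := by linarith [Real.log_two_gt_d9]
    _ ≤ L := Real.log_le_log (by norm_num) (by simp only [n]; exact_mod_cast hn)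
  have hD₀ : 5 * L ≤ ⌈5 * L⌉₊ := Nat.le_ceil _
  have hD₀' : (⌈5 * L⌉₊ : ℝ) < 5 * L + 1 := Nat.ceil_lt_add_one (by positivity)
  refine G.exists_card_ge_isNearlyRegularIn (by positivity) (D₀ := ⌈5 * L⌉₊) ?_ ?_
  · exact_mod_cast (show (2 : ℝ) < ⌈5 * L⌉₊ by linarith)
  · have hcL : (2 * n / (5 * L) + n / (30 * L)) * L = 13 / 30 * n := by field_simp; ring
    have hs : n / (30 * L) * (⌈5 * L⌉₊ + 1) ≤ 17 / 30 * n := by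
      rw [div_mul_eq_mul_div, div_le_iff₀ (by positivity)]
      nlinarith
    rw [hcL]
    linarith

/-- Every `n`-vertex graph (`n ≥ 2`) has an induced subgraph on at least `n/(30 log n)`
vertices whose maximum degree is at most `5 log n` times its minimum degree. -/
theorem exists_nearly_regular_induced {V : Type*} [Fintype V] [DecidableEq V]
    (G : SimpleGraph V) [DecidableRel G.Adj] (hn : 2 ≤ Fintype.card V) :
    ∃ A : Finset V,
      (Fintype.card V : ℝ) / (30 * Real.log (Fintype.card V)) ≤ (A.card : ℝ) ∧
      ∀ v ∈ A, ∀ w ∈ A,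
        ((A.filter (fun x => G.Adj v x)).card : ℝ) ≤
          5 * Real.log (Fintype.card V) * ((A.filter (fun x => G.Adj w x)).card : ℝ) :=
  exists_nearly_regular_induced_general G hn
end

section
/- Let G be a graph, S ⊆ V(G), M > 1, and t₁, t₂ ∈ ℕ. Suppose v₁, v₂ ∈ V(G) satisfy v₂ ∉ W_{t₁+1}^S(v₁;M) and 3·4^{t₁}·d^S(v₁) ≥ 4^{t₂}·d^S(v₂). Then W_{t₁}^S(v₁;M) ∩ W_{t₂}^S(v₂;M) = ∅. -/
open Finset

/-- The `(M,t)`-cluster neighbourhood of `v` to `S`: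
`W_t^S(v;M) = {u : |N^S(u) △ N^S(v)| ≤ (4^t/M)·|N^S(v)|}`. -/
noncomputable def clusterNbhd {V : Type*} [Fintype V] [DecidableEq V] (G : SimpleGraph V)
    [DecidableRel G.Adj] (S : Finset V) (v : V) (M : ℝ) (t : ℕ) : Finset V :=
  Finset.univ.filter (fun u =>
    ((symmDiff (G.neighborFinset u ∩ S) (G.neighborFinset v ∩ S)).card : ℝ) ≤
      (4 ^ t / M) * ((G.neighborFinset v ∩ S).card : ℝ))

/-- Disjointness of cluster neighbourhoods under a degree condition: if
`v₂ ∉ W_{t₁+1}^S(v₁;M)` and `3·4^{t₁}·d^S(v₁) ≥ 4^{t₂}·d^S(v₂)`, then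
`W_{t₁}^S(v₁;M) ∩ W_{t₂}^S(v₂;M) = ∅`. -/
theorem clusterNbhd_disjoint_of_degree {V : Type*} [Fintype V] [DecidableEq V]
    (G : SimpleGraph V) [DecidableRel G.Adj] (S : Finset V) (M : ℝ) (hM : 1 < M)
    (t₁ t₂ : ℕ) (v₁ v₂ : V)
    (hv : v₂ ∉ clusterNbhd G S v₁ M (t₁ + 1))
    (hdeg : (4 : ℝ) ^ t₂ * ((G.neighborFinset v₂ ∩ S).card : ℝ) ≤
      3 * 4 ^ t₁ * ((G.neighborFinset v₁ ∩ S).card : ℝ)) :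
    clusterNbhd G S v₁ M t₁ ∩ clusterNbhd G S v₂ M t₂ = ∅ := by
  classical
  by_contra h
  obtain ⟨u, hu⟩ := Finset.nonempty_iff_ne_empty.2 h
  rw [Finset.mem_inter] at hu
  obtain ⟨h1, h2⟩ := hu
  simp only [clusterNbhd, Finset.mem_filter, Finset.mem_univ, true_and] at h1 h2 hv
  apply hv
  set A := G.neighborFinset v₁ ∩ S
  set B := G.neighborFinset v₂ ∩ S
  set C := G.neighborFinset u ∩ S
  have hM0 : (0 : ℝ) < M := lt_trans one_pos hM
  have htri : ((symmDiff B A).card : ℝ) ≤ ((symmDiff C A).card : ℝ) + ((symmDiff C B).card : ℝ) := by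
    have hsub : symmDiff B A ⊆ symmDiff B C ∪ symmDiff C A := symmDiff_triangle B C A
    calc ((symmDiff B A).card : ℝ) ≤ ((symmDiff B C ∪ symmDiff C A).card : ℝ) := by
          exact_mod_cast Finset.card_le_card hsub
      _ ≤ ((symmDiff B C).card : ℝ) + ((symmDiff C A).card : ℝ) := by
          exact_mod_cast Finset.card_union_le _ _
      _ = ((symmDiff C A).card : ℝ) + ((symmDiff C B).card : ℝ) := by
          rw [symmDiff_comm]; ring
  calc ((symmDiff B A).card : ℝ) ≤ ((symmDiff C A).card : ℝ) + ((symmDiff C B).card : ℝ) := htri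
    _ ≤ 4 ^ t₁ / M * (A.card : ℝ) + 4 ^ t₂ / M * (B.card : ℝ) := add_le_add h1 h2
    _ ≤ 4 ^ t₁ / M * (A.card : ℝ) + 3 * 4 ^ t₁ / M * (A.card : ℝ) := by
        gcongr 4 ^ t₁ / M * (A.card : ℝ) + ?_
        rw [div_mul_eq_mul_div, div_mul_eq_mul_div, div_le_div_iff₀ hM0 hM0]
        nlinarith [hM0]
    _ = 4 ^ (t₁ + 1) / M * (A.card : ℝ) := by ring
end

section
/- Let G be a graph, S ⊆ V(G), M > 1, t₁, t₂ ∈ ℕ, and v₁, v₂ ∈ V(G) with v₂ ∉ W_{t₁+1}^S(v₁;M) and v₁ ∉ W_{t₂+1}^S(v₂;M). Then W_{t₁}^S(v₁;M) ∩ W_{t₂}^S(v₂;M) = ∅. -/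
open Finset

/-- If `v₂ ∉ W_{t₁+1}^S(v₁;M)` and `v₁ ∉ W_{t₂+1}^S(v₂;M)`, then the cluster
neighbourhoods `W_{t₁}^S(v₁;M)` and `W_{t₂}^S(v₂;M)` are disjoint. -/
theorem clusterNbhd_disjoint {V : Type*} [Fintype V] [DecidableEq V]
    (G : SimpleGraph V) [DecidableRel G.Adj] (S : Finset V) (M : ℝ) (hM : 1 < M)
    (t₁ t₂ : ℕ) (v₁ v₂ : V)
    (h₁ : v₂ ∉ clusterNbhd G S v₁ M (t₁ + 1))
    (h₂ : v₁ ∉ clusterNbhd G S v₂ M (t₂ + 1)) :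
    clusterNbhd G S v₁ M t₁ ∩ clusterNbhd G S v₂ M t₂ = ∅ := by
  classical
  ext u
  simp only [clusterNbhd, mem_inter, mem_filter, mem_univ, true_and, notMem_empty, iff_false,
    not_and]
  intro hu1 hu2
  exfalso
  set A := G.neighborFinset v₁ ∩ S with hA
  set B := G.neighborFinset v₂ ∩ S with hB
  set C := G.neighborFinset u ∩ S with hC
  have hM0 : (0:ℝ) < M := lt_trans one_pos hM
  have h1' : (4 ^ (t₁+1) / M) * (A.card : ℝ) < ((symmDiff B A).card : ℝ) := by
    have := h₁
    simp only [clusterNbhd, mem_filter, mem_univ, true_and, not_le] at this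
    exact this
  have h2' : (4 ^ (t₂+1) / M) * (B.card : ℝ) < ((symmDiff A B).card : ℝ) := by
    have := h₂
    simp only [clusterNbhd, mem_filter, mem_univ, true_and, not_le] at this
    exact this
  rw [symmDiff_comm] at h1'
  have htri : ((symmDiff A B).card : ℝ) ≤ ((symmDiff A C).card : ℝ) + ((symmDiff C B).card : ℝ) := by
    have hsub : symmDiff A B ⊆ symmDiff A C ∪ symmDiff C B := symmDiff_triangle A C B
    have h1 : (symmDiff A B).card ≤ (symmDiff A C).card + (symmDiff C B).card :=
      le_trans (card_le_card hsub) (card_union_le _ _)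
    exact_mod_cast h1
  rw [symmDiff_comm A C] at htri
  have hAC : ((symmDiff C A).card : ℝ) ≤ (4 ^ t₁ / M) * (A.card : ℝ) := hu1
  have hBC : ((symmDiff C B).card : ℝ) ≤ (4 ^ t₂ / M) * (B.card : ℝ) := hu2
  have e1 : (4:ℝ) ^ (t₁+1) / M * (A.card : ℝ) = 4 * ((4 ^ t₁ / M) * (A.card : ℝ)) := by
    ring
  have e2 : (4:ℝ) ^ (t₂+1) / M * (B.card : ℝ) = 4 * ((4 ^ t₂ / M) * (B.card : ℝ)) := by
    ring
  rw [e1] at h1'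
  rw [e2] at h2'
  have hD0 : (0:ℝ) ≤ ((symmDiff A B).card : ℝ) := Nat.cast_nonneg _
  nlinarith [hAC, hBC, h1', h2', htri, hD0]
end

section
/- Let G be an n-vertex graph, S ⊆ V(G), M > 1, t ∈ ℕ, d > 0, and δ ∈ (0,1]. Suppose A ⊆ V(G) with |A| = m ≥ δ·n ≥ 1 is such that |W_t^S(v;M)| ≤ n/m and d^S(v) ≥ d for all v ∈ A. Then there exists U ⊆ A with |U| ≥ δ·m/2 such that |N^S(u) △ N^S(v)| ≥ 4^t·d/M for all distinct u, v ∈ U. -/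
open Finset

/-- If many vertices have small cluster neighbourhoods and degree at least `d` to `S`,
then a large subset of them is pairwise `4^t·d/M`-diverse to `S`. -/
theorem diverse_subset_of_small_clusters {V : Type*} [Fintype V] [DecidableEq V]
    (G : SimpleGraph V) [DecidableRel G.Adj] (S : Finset V) (M : ℝ) (hM : 1 < M)
    (t : ℕ) (d : ℝ) (hd : 0 < d) (δ : ℝ) (hδ0 : 0 < δ) (hδ1 : δ ≤ 1)
    (A : Finset V) (m : ℕ) (hm : A.card = m)
    (hmn : δ * (Fintype.card V : ℝ) ≤ (m : ℝ)) (h1 : (1 : ℝ) ≤ δ * (Fintype.card V : ℝ))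
    (hW : ∀ v ∈ A, ((clusterNbhd G S v M t).card : ℝ) ≤ (Fintype.card V : ℝ) / (m : ℝ))
    (hdeg : ∀ v ∈ A, d ≤ ((G.neighborFinset v ∩ S).card : ℝ)) :
    ∃ U ⊆ A, δ * (m : ℝ) / 2 ≤ (U.card : ℝ) ∧
      ∀ u ∈ U, ∀ v ∈ U, u ≠ v →
        4 ^ t * d / M ≤
          ((symmDiff (G.neighborFinset u ∩ S) (G.neighborFinset v ∩ S)).card : ℝ) := by
  classical
  set n : ℕ := Fintype.card V with hn
  have hM0 : (0 : ℝ) < M := lt_trans one_pos hM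
  have hm1 : (1 : ℝ) ≤ (m : ℝ) := le_trans h1 hmn
  have hm0 : (0 : ℝ) < (m : ℝ) := lt_of_lt_of_le one_pos hm1
  have hmn' : (m : ℝ) ≤ (n : ℝ) := by
    have := Finset.card_le_univ A
    rw [hm] at this
    exact_mod_cast this
  -- the "closeness" threshold
  set thr : ℝ := 4 ^ t * d / M with hthr
  have hthr0 : 0 < thr := by positivity
  -- greedy/Turán step by strong induction
  have key : ∀ (k : ℕ) (B : Finset V), B ⊆ A → B.card ≤ k →
      ∃ U ⊆ B, ((B.card : ℝ) * (m : ℝ) ≤ (U.card : ℝ) * ((n : ℝ) + (m : ℝ))) ∧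
        ∀ u ∈ U, ∀ v ∈ U, u ≠ v →
          thr ≤ ((symmDiff (G.neighborFinset u ∩ S) (G.neighborFinset v ∩ S)).card : ℝ) := by
    intro k
    induction k with
    | zero =>
      intro B _ hB
      refine ⟨∅, Finset.empty_subset _, ?_, by simp⟩
      simp [Nat.le_zero.mp hB]
    | succ k ih =>
      intro B hBA hBk
      rcases B.eq_empty_or_nonempty with rfl | ⟨v, hv⟩
      · exact ⟨∅, Finset.empty_subset _, by simp, by simp⟩
      -- remove v and everything close to it
      set R : Finset V := B.filter (fun u =>
        ((symmDiff (G.neighborFinset u ∩ S) (G.neighborFinset v ∩ S)).card : ℝ) < thr) with hR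
      have hvR : v ∈ R := by
        simp only [hR, Finset.mem_filter]
        exact ⟨hv, by simpa using hthr0⟩
      have hRB : R ⊆ B := Finset.filter_subset _ _
      -- R is contained in the cluster neighbourhood of v
      have hRW : R ⊆ clusterNbhd G S v M t := by
        intro u hu
        simp only [hR, Finset.mem_filter] at hu
        simp only [clusterNbhd, Finset.mem_filter, Finset.mem_univ, true_and]
        have hdv := hdeg v (hBA hv)
        calc ((symmDiff (G.neighborFinset u ∩ S) (G.neighborFinset v ∩ S)).card : ℝ)
            ≤ thr := le_of_lt hu.2
          _ = (4 ^ t / M) * d := by rw [hthr]; ring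
          _ ≤ (4 ^ t / M) * ((G.neighborFinset v ∩ S).card : ℝ) := by
              apply mul_le_mul_of_nonneg_left hdv; positivity
      have hRcard : ((R.card : ℝ)) * (m : ℝ) ≤ (n : ℝ) := by
        have h1 : ((R.card : ℝ)) ≤ ((clusterNbhd G S v M t).card : ℝ) := by
          exact_mod_cast Finset.card_le_card hRW
        have h2 := hW v (hBA hv)
        have : ((R.card : ℝ)) ≤ (n : ℝ) / (m : ℝ) := le_trans h1 h2
        calc ((R.card : ℝ)) * (m : ℝ) ≤ ((n : ℝ) / (m : ℝ)) * m := by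
              exact mul_le_mul_of_nonneg_right this (le_of_lt hm0)
          _ = (n : ℝ) := by field_simp
      -- induct on B \ R
      have hB'k : (B \ R).card ≤ k := by
        have h1 : (B \ R).card = B.card - R.card := Finset.card_sdiff_of_subset hRB
        have h2 : 1 ≤ R.card := Finset.card_pos.mpr ⟨v, hvR⟩
        omega
      obtain ⟨U', hU'sub, hU'card, hU'div⟩ := ih (B \ R) (le_trans Finset.sdiff_subset hBA) hB'k
      have hvU' : v ∉ U' := fun h => (Finset.mem_sdiff.mp (hU'sub h)).2 hvR
      refine ⟨insert v U', ?_, ?_, ?_⟩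
      · intro u hu
        rcases Finset.mem_insert.mp hu with rfl | hu
        · exact hv
        · exact (Finset.mem_sdiff.mp (hU'sub hu)).1
      · have hcards : (B.card : ℝ) = ((B \ R).card : ℝ) + (R.card : ℝ) := by
          have h1 : (B \ R).card = B.card - R.card := Finset.card_sdiff_of_subset hRB
          have h2 : R.card ≤ B.card := Finset.card_le_card hRB
          have : B.card = (B \ R).card + R.card := by omega
          exact_mod_cast this
        have hins : ((insert v U').card : ℝ) = (U'.card : ℝ) + 1 := by
          rw [Finset.card_insert_of_notMem hvU']; push_cast; ring
        rw [hcards, hins]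
        have hnm0 : (0 : ℝ) ≤ (n : ℝ) + (m : ℝ) := by positivity
        nlinarith [hRcard, hU'card, hm0.le]
      · intro u hu w hw huw
        have pair : ∀ x ∈ U', thr ≤
            ((symmDiff (G.neighborFinset x ∩ S) (G.neighborFinset v ∩ S)).card : ℝ) := by
          intro x hx
          have hxB : x ∈ B \ R := hU'sub hx
          have hxB' := Finset.mem_sdiff.mp hxB
          by_contra hcon
          push_neg at hcon
          exact hxB'.2 (Finset.mem_filter.mpr ⟨hxB'.1, hcon⟩)
        rcases Finset.mem_insert.mp hu with rfl | hu' <;>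
          rcases Finset.mem_insert.mp hw with rfl | hw'
        · exact absurd rfl huw
        · rw [symmDiff_comm]; exact pair w hw'
        · exact pair u hu'
        · exact hU'div u hu' w hw' huw
  obtain ⟨U, hUA, hUcard, hUdiv⟩ := key A.card A (le_refl _) (le_refl _)
  refine ⟨U, hUA, ?_, hUdiv⟩
  rw [hm] at hUcard
  have hnm0 : (0 : ℝ) < (n : ℝ) + (m : ℝ) := by
    have : (0:ℝ) < (n:ℝ) := lt_of_lt_of_le hm0 hmn'
    linarith
  nlinarith [hUcard, hmn, hmn', hm0, hδ1, mul_le_mul_of_nonneg_left hmn' hδ0.le]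
end

section
/- Let n ∈ ℕ, p ∈ (1/n, 1) and X ~ Bin(n,p). Then P(X ≥ n·p) > 1/4. -/
/-!
Write `binomialTail n k p` for `P(Bin(n, p) ≥ k)` and let `k + 1 = ⌈n p⌉`, so that `k ≥ 1` and
`k / n < p`. Since `∂ₚ binomialTail (n + 1) (k + 1) p = (n + 1) P(Bin(n, p) = k) > 0`, the tail is
strictly increasing in `p`, and it suffices to bound `binomialTail n (k + 1) (k / n)` from below.
This quantity is nondecreasing in `n`: Pascal's rule gives
`binomialTail (n + 1) (k + 1) q = binomialTail n (k + 1) q + q P(Bin(n, q) = k)`, and since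
`q = k / n` is the mode of the density, the mean value theorem bounds the loss caused by moving the
parameter from `q` to `k / (n + 1)` by exactly that last term. At `n = k + 1` the quantity equals
`(k / (k + 1)) ^ (k + 1)`, which increases with `k` by Bernoulli's inequality and is `1 / 4` at `k = 1`.
-/

open Finset

noncomputable def binomialTail (n k : ℕ) (p : ℝ) : ℝ :=
  ∑ j ∈ Icc k n, (n.choose j : ℝ) * p ^ j * (1 - p) ^ (n - j)

theorem binomialTail_eq_eval_sum_bernsteinPolynomial (n k : ℕ) (p : ℝ) :
    binomialTail n k p = (∑ j ∈ Icc k n, bernsteinPolynomial ℝ n j).eval p := by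
  simp [binomialTail, bernsteinPolynomial, Polynomial.eval_finsetSum]

theorem derivative_sum_Icc_bernsteinPolynomial (R : Type*) [CommRing R] (n k : ℕ) :
    Polynomial.derivative (∑ j ∈ Icc (k + 1) (n + 1), bernsteinPolynomial R (n + 1) j) =
      (n + 1) * bernsteinPolynomial R n k := by
  rcases le_or_gt k n with hkn | hnk
  · rw [← map_add_right_Icc k n 1, sum_map, Polynomial.derivative_sum]
    simp only [addRightEmbedding_apply, bernsteinPolynomial.derivative_succ_aux, ← mul_sum]
    have h := sum_Icc_sub hkn (fun i => -bernsteinPolynomial R n i)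
    simp only [neg_sub_neg] at h
    rw [h, bernsteinPolynomial.eq_zero_of_lt R (Nat.lt_succ_self n)]
    ring
  · simp [Icc_eq_empty_of_lt (Nat.succ_lt_succ hnk), bernsteinPolynomial.eq_zero_of_lt R hnk]

theorem hasDerivAt_binomialTail (n k : ℕ) (p : ℝ) :
    HasDerivAt (binomialTail (n + 1) (k + 1))
      ((n + 1) * (n.choose k * p ^ k * (1 - p) ^ (n - k))) p := by
  have h := (∑ j ∈ Icc (k + 1) (n + 1), bernsteinPolynomial ℝ (n + 1) j).hasDerivAt p
  rw [derivative_sum_Icc_bernsteinPolynomial] at h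
  rw [funext (binomialTail_eq_eval_sum_bernsteinPolynomial (n + 1) (k + 1))]
  refine h.congr_deriv ?_
  simp [bernsteinPolynomial]

theorem strictMonoOn_binomialTail {n k : ℕ} (hk : 1 ≤ k) (hkn : k ≤ n) :
    StrictMonoOn (binomialTail n k) (Set.Icc 0 1) := by
  obtain ⟨k, rfl⟩ : ∃ j, k = j + 1 := ⟨k - 1, by omega⟩
  obtain ⟨n, rfl⟩ : ∃ m, n = m + 1 := ⟨n - 1, by omega⟩
  refine strictMonoOn_of_deriv_pos (convex_Icc 0 1)
    (fun x _ => (hasDerivAt_binomialTail n k x).continuousAt.continuousWithinAt) fun x hx => ?_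
  rw [interior_Icc, Set.mem_Ioo] at hx
  obtain ⟨hx0, hx1⟩ := hx
  have hchoose : (0 : ℝ) < n.choose k := mod_cast Nat.choose_pos (by omega)
  have h1x : 0 < 1 - x := by linarith
  rw [(hasDerivAt_binomialTail n k x).deriv]
  positivity

theorem choose_succ_succ_mul_pow_mul_one_sub_pow (n j : ℕ) (p : ℝ) :
    ((n + 1).choose (j + 1) : ℝ) * p ^ (j + 1) * (1 - p) ^ (n - j) =
      p * (n.choose j * p ^ j * (1 - p) ^ (n - j)) +
        (1 - p) * (n.choose (j + 1) * p ^ (j + 1) * (1 - p) ^ (n - (j + 1))) := by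
  rcases lt_or_ge j n with hjn | hnj
  · obtain ⟨d, rfl⟩ : ∃ d, n = j + 1 + d := ⟨n - (j + 1), by omega⟩
    rw [show j + 1 + d - j = d + 1 by omega, show j + 1 + d - (j + 1) = d by omega,
      Nat.choose_succ_succ', Nat.cast_add]
    ring
  · rw [Nat.choose_succ_succ', Nat.choose_eq_zero_of_lt (Nat.lt_succ_of_le hnj),
      Nat.sub_eq_zero_of_le hnj]
    push_cast
    ring

theorem binomialTail_succ_succ {n k : ℕ} (hkn : k ≤ n) (p : ℝ) :
    binomialTail (n + 1) (k + 1) p =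
      binomialTail n (k + 1) p + p * (n.choose k * p ^ k * (1 - p) ^ (n - k)) := by
  set b : ℕ → ℝ := fun j => n.choose j * p ^ j * (1 - p) ^ (n - j) with hb
  have hlow : ∑ j ∈ Icc k n, b j = b k + binomialTail n (k + 1) p := by
    rw [Icc_eq_cons_Ioc hkn, sum_cons, ← Icc_add_one_left_eq_Ioc]
    rfl
  have hhigh : ∑ j ∈ Icc k n, b (j + 1) = binomialTail n (k + 1) p := by
    calc ∑ j ∈ Icc k n, b (j + 1) = ∑ j ∈ Icc (k + 1) (n + 1), b j := by
          rw [← map_add_right_Icc, sum_map]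
          rfl
      _ = binomialTail n (k + 1) p + b (n + 1) := sum_Icc_succ_top (by omega) b
      _ = binomialTail n (k + 1) p := by simp [hb]
  calc binomialTail (n + 1) (k + 1) p = ∑ j ∈ Icc k n, (p * b j + (1 - p) * b (j + 1)) := by
        rw [binomialTail, ← map_add_right_Icc, sum_map]
        refine sum_congr rfl fun j _ => ?_
        rw [addRightEmbedding_apply, Nat.add_sub_add_right]
        exact choose_succ_succ_mul_pow_mul_one_sub_pow n j p
    _ = p * (b k + binomialTail n (k + 1) p) + (1 - p) * binomialTail n (k + 1) p := by
        rw [sum_add_distrib, ← mul_sum, ← mul_sum, hlow, hhigh]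
    _ = _ := by ring

theorem monotoneOn_pow_mul_one_sub_pow (a b : ℕ) :
    MonotoneOn (fun t : ℝ => t ^ a * (1 - t) ^ b) (Set.Icc 0 (a / (a + b))) := by
  have hderiv (x : ℝ) : HasDerivAt (fun t : ℝ => t ^ a * (1 - t) ^ b)
      (a * x ^ (a - 1) * (1 - x) ^ b + x ^ a * (b * (1 - x) ^ (b - 1) * -1)) x :=
    (hasDerivAt_pow a x).mul (((hasDerivAt_id x).const_sub 1).pow b)
  refine monotoneOn_of_deriv_nonneg (convex_Icc _ _) (by fun_prop)
    (fun x _ => (hderiv x).differentiableAt.differentiableWithinAt) fun x hx => ?_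
  rw [interior_Icc, Set.mem_Ioo] at hx
  obtain ⟨hx0, hxa⟩ := hx
  rw [(hderiv x).deriv]
  rcases a with _ | a
  · simp only [Nat.cast_zero, zero_div] at hxa
    linarith
  rcases b with _ | b
  · simp only [pow_zero, CharP.cast_eq_zero, zero_mul, mul_zero, add_zero, mul_one]
    positivity
  have hmode : 0 ≤ (a + 1 : ℝ) * (1 - x) - (b + 1) * x := by
    rw [lt_div_iff₀ (by positivity)] at hxa
    push_cast at hxa
    linarith
  have h1x : 0 ≤ 1 - x := by nlinarith
  have hfactor : ((a + 1 : ℕ) : ℝ) * x ^ (a + 1 - 1) * (1 - x) ^ (b + 1) +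
      x ^ (a + 1) * ((b + 1 : ℕ) * (1 - x) ^ (b + 1 - 1) * -1) =
      x ^ a * (1 - x) ^ b * ((a + 1 : ℝ) * (1 - x) - (b + 1) * x) := by
    simp only [Nat.add_sub_cancel]
    push_cast
    ring
  rw [hfactor]
  positivity

theorem binomialTail_div_le_binomialTail_succ_div {n k : ℕ} (hkn : k ≤ n) :
    binomialTail n (k + 1) (k / n) ≤ binomialTail (n + 1) (k + 1) (k / (n + 1)) := by
  set q : ℝ := k / n with hq
  set q' : ℝ := k / (n + 1) with hq'
  set density : ℝ → ℝ := fun t => (n + 1) * (n.choose k * t ^ k * (1 - t) ^ (n - k))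
  have hq'q : q' ≤ q := by
    rcases Nat.eq_zero_or_pos n with rfl | hn
    · simp [hq, hq', Nat.le_zero.mp hkn]
    · exact div_le_div_of_nonneg_left (Nat.cast_nonneg k) (by positivity) (by linarith)
  have hscale : (n + 1) * (q - q') = q := by
    rcases Nat.eq_zero_or_pos n with rfl | hn
    · simp [hq, hq', Nat.le_zero.mp hkn]
    · rw [hq, hq']
      field_simp
      ring
  have hdensity_le : ∀ x ∈ Set.Icc q' q, density x ≤ density q := by
    intro x hx
    have hmode : (k : ℝ) / (k + (n - k : ℕ)) = q := by rw [Nat.cast_sub hkn, add_sub_cancel]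
    have hq0 : 0 ≤ q' := by positivity
    have hmono := monotoneOn_pow_mul_one_sub_pow k (n - k)
    rw [hmode] at hmono
    have := hmono ⟨hq0.trans hx.1, hx.2⟩ ⟨hq0.trans hq'q, le_rfl⟩ hx.2
    have hcoeff : (0 : ℝ) ≤ (n + 1) * n.choose k := by positivity
    simpa only [density, mul_assoc] using mul_le_mul_of_nonneg_left this hcoeff
  have hgrowth : binomialTail (n + 1) (k + 1) q - binomialTail (n + 1) (k + 1) q' ≤
      density q * (q - q') :=
    (convex_Icc q' q).image_sub_le_mul_sub_of_deriv_le
      (fun x _ => (hasDerivAt_binomialTail n k x).continuousAt.continuousWithinAt)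
      (fun x _ => (hasDerivAt_binomialTail n k x).differentiableAt.differentiableWithinAt)
      (fun x hx => (hasDerivAt_binomialTail n k x).deriv ▸ hdensity_le x (interior_subset hx))
      q' ⟨le_rfl, hq'q⟩ q ⟨hq'q, le_rfl⟩ hq'q
  have hstep : density q * (q - q') = q * (n.choose k * q ^ k * (1 - q) ^ (n - k)) := by
    simp only [density]
    linear_combination (n.choose k * q ^ k * (1 - q) ^ (n - k)) * hscale
  linarith [binomialTail_succ_succ hkn q]

theorem binomialTail_self (n : ℕ) (p : ℝ) : binomialTail n n p = p ^ n := by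
  simp [binomialTail]

theorem div_succ_pow_le_binomialTail {k n : ℕ} (hkn : k < n) :
    ((k : ℝ) / (k + 1)) ^ (k + 1) ≤ binomialTail n (k + 1) (k / n) := by
  induction n, hkn using Nat.le_induction with
  | base => simp [binomialTail_self]
  | succ n hkn ih => exact ih.trans (mod_cast binomialTail_div_le_binomialTail_succ_div (Nat.le_of_lt hkn))

theorem div_succ_pow_succ_le_succ {m : ℕ} (hm : 1 ≤ m) :
    ((m : ℝ) / (m + 1)) ^ (m + 1) ≤ ((m + 1 : ℝ) / (m + 1 + 1)) ^ (m + 1 + 1) := by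
  have hx : (0 : ℝ) < m := by exact_mod_cast hm
  set u : ℝ := 1 / (m * (m + 2)) with hu
  have hu0 : 0 < u := by positivity
  have hbernoulli : 1 + (m + 1) * u ≤ (1 + u) ^ (m + 1) := by
    exact_mod_cast one_add_mul_le_pow (by linarith : (-2 : ℝ) ≤ u) (m + 1)
  have hprod : (m / (m + 1)) * (1 + u) = (m + 1 : ℝ) / (m + 1 + 1) := by
    rw [hu]
    field_simp
    ring
  have hcoeff : 1 ≤ (m + 1 : ℝ) / (m + 1 + 1) * (1 + (m + 1) * u) := by
    rw [hu, div_mul_eq_mul_div, le_div_iff₀ (by positivity)]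
    field_simp
    nlinarith
  calc ((m : ℝ) / (m + 1)) ^ (m + 1)
      ≤ (m / (m + 1)) ^ (m + 1) * ((m + 1 : ℝ) / (m + 1 + 1) * (1 + (m + 1) * u)) :=
        le_mul_of_one_le_right (by positivity) hcoeff
    _ ≤ (m / (m + 1)) ^ (m + 1) * ((m + 1 : ℝ) / (m + 1 + 1) * (1 + u) ^ (m + 1)) := by
        gcongr
    _ = ((m + 1 : ℝ) / (m + 1 + 1)) ^ (m + 1 + 1) := by
        rw [pow_succ _ (m + 1), ← hprod, mul_pow]
        ring

theorem one_quarter_le_div_succ_pow {m : ℕ} (hm : 1 ≤ m) : (1 / 4 : ℝ) ≤ (m / (m + 1)) ^ (m + 1) := by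
  induction m, hm using Nat.le_induction with
  | base => norm_num
  | succ m hm ih => exact ih.trans (mod_cast div_succ_pow_succ_le_succ hm)

theorem filter_range_succ_le_eq_Icc_ceil {α : Type*} [Semiring α] [PartialOrder α]
    [FloorSemiring α] [DecidableLE α] (n : ℕ) (x : α) :
    (range (n + 1)).filter (fun j : ℕ => x ≤ j) = Icc ⌈x⌉₊ n := by
  ext j
  simp [Nat.ceil_le, and_comm]

/-- For `X ~ Bin(n,p)` with `p ∈ (1/n, 1)`, `P(X ≥ np) > 1/4`. -/
theorem binomial_exceeds_mean (n : ℕ) (p : ℝ) (hp0 : 1 / (n : ℝ) < p) (hp1 : p < 1) :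
    (1 / 4 : ℝ) <
      ∑ k ∈ (Finset.range (n + 1)).filter (fun k : ℕ => (n : ℝ) * p ≤ (k : ℝ)),
        (n.choose k : ℝ) * p ^ k * (1 - p) ^ (n - k) := by
  rw [filter_range_succ_le_eq_Icc_ceil]
  change 1 / 4 < binomialTail n ⌈n * p⌉₊ p
  rcases Nat.eq_zero_or_pos n with rfl | hn
  · norm_num [binomialTail]
  have hn' : (0 : ℝ) < n := Nat.cast_pos.2 hn
  have hp : 0 < p := (by positivity : (0 : ℝ) < 1 / n).trans hp0
  have hnp : 1 < n * p := by rwa [div_lt_iff₀ hn', mul_comm] at hp0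
  obtain ⟨k, hk⟩ : ∃ k, ⌈n * p⌉₊ = k + 1 :=
    ⟨⌈n * p⌉₊ - 1, by have := Nat.ceil_pos.2 (by positivity : (0 : ℝ) < n * p); omega⟩
  have hk1 : 1 ≤ k := by
    have : 1 < ⌈n * p⌉₊ := Nat.lt_ceil.2 (by exact_mod_cast hnp)
    omega
  have hkn : k < n := by
    have : ⌈n * p⌉₊ ≤ n := Nat.ceil_le.2 (by nlinarith)
    omega
  have hkp : k / n < p := by
    have : k < n * p := Nat.lt_ceil.1 (by omega)
    rwa [div_lt_iff₀ hn', mul_comm]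
  rw [hk]
  calc (1 / 4 : ℝ) ≤ (k / (k + 1)) ^ (k + 1) := one_quarter_le_div_succ_pow hk1
    _ ≤ binomialTail n (k + 1) (k / n) := div_succ_pow_le_binomialTail hkn
    _ < binomialTail n (k + 1) p :=
        strictMonoOn_binomialTail (by omega) hkn
          ⟨by positivity, (div_le_one hn').2 (by exact_mod_cast hkn.le)⟩ ⟨hp.le, hp1.le⟩ hkp
end
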